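/- arXiv:1308.6632 — 4 statements merged into one kernel-verified Lean document; each statement's English description precedes it below -/
import Mathlib

section
/- The Euler update can be written as c_j^{n+1} = c_j^n(1 − λ(e^{−A_j/2} + e^{A_{j−1}/2})) + λ c_{j+1}^n e^{A_j/2} + λ c_{j−1}^n e^{−A_{j−1}/2}, where A_j = ψ_{j+1} − ψ_j. If hσ_b ≤ A_j ≤ −hσ_a for all j, c_j^n ≥ 0 for all j, and λ < 1/(e^{−hσ_b/2} + e^{−hσ_a/2}), then c_j^{n+1} ≥ 0 for all j. -/
/-- Positivity preservation of the rewritten Euler update under the CFL condition. -/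
theorem euler_positivity
    (N : ℕ) (hN : 1 ≤ N) (h k : ℝ) (hh : 0 < h) (hk : 0 < k)
    (σa σb : ℝ) (lam : ℝ) (hlam : lam = k / h)
    (c cnew A : ℕ → ℝ)
    (hAbound : ∀ j ≤ N, h * σb ≤ A j ∧ A j ≤ -h * σa)
    (hc : ∀ j, 0 ≤ c j)
    (hCFL : lam < 1 / (Real.exp (-h * σb / 2) + Real.exp (-h * σa / 2)))
    (hup : ∀ j ∈ Finset.Icc 1 N,
      cnew j = c j * (1 - lam * (Real.exp (-A j / 2) + Real.exp (A (j - 1) / 2)))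
        + lam * c (j + 1) * Real.exp (A j / 2)
        + lam * c (j - 1) * Real.exp (-A (j - 1) / 2)) :
    ∀ j ∈ Finset.Icc 1 N, 0 ≤ cnew j := by
  intro j hj
  rw [Finset.mem_Icc] at hj
  obtain ⟨hj1, hjN⟩ := hj
  have hlam0 : 0 ≤ lam := by
    rw [hlam]; positivity
  have hS : 0 < Real.exp (-h * σb / 2) + Real.exp (-h * σa / 2) := by positivity
  have hAj := hAbound j hjN
  have hAj1 := hAbound (j - 1) (le_trans (Nat.sub_le j 1) hjN)
  have h1 : Real.exp (-A j / 2) ≤ Real.exp (-h * σb / 2) :=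
    Real.exp_le_exp.2 (by linarith [hAj.1])
  have h2 : Real.exp (A (j - 1) / 2) ≤ Real.exp (-h * σa / 2) :=
    Real.exp_le_exp.2 (by linarith [hAj1.2])
  have hcoef : 0 ≤ 1 - lam * (Real.exp (-A j / 2) + Real.exp (A (j - 1) / 2)) := by
    have hlt : lam * (Real.exp (-h * σb / 2) + Real.exp (-h * σa / 2)) < 1 := by
      rw [lt_div_iff₀ hS] at hCFL
      linarith
    nlinarith [Real.exp_pos (-A j / 2), Real.exp_pos (A (j - 1) / 2)]
  rw [hup j (Finset.mem_Icc.2 ⟨hj1, hjN⟩)]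
  have := hc j
  have := hc (j + 1)
  have := hc (j - 1)
  positivity
end

section
/- (Discrete Green's identity for the potential term) Suppose ψ_j(t) and c_j(t) satisfy the discrete Poisson equation ψ_{j+1} − 2ψ_j + ψ_{j−1} = −h² c_j for j = 1,…,N at every time, with boundary conditions ψ_0 = ψ_1 + hσ_a and ψ_{N+1} = ψ_N + hσ_b where σ_a, σ_b are time-independent constants. Then (h/2)∑_{j=1}^N (c_j ψ_j' − c_j' ψ_j) = −(σ_a ψ_1' + σ_b ψ_N')/2. -/
/-!
At a fixed time write `u j = ψ j t` and `v j = ψ j' t`. The Poisson equation gives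
`c j = -Δu j / h²` and, differentiating, `c j' = -Δv j / h²`, where `Δ` is the second
difference. The discrete Lagrange identity `Δu j * v j - Δv j * u j = W j - W (j - 1)`
for the Wronskian `W j = u (j + 1) * v j - v (j + 1) * u j` makes the sum telescope to
`W N - W 0`, and the Neumann-type boundary conditions evaluate `W N = h σb ψ_N'` and
`W 0 = -h σa ψ_1'`.
-/

open Finset

section SecondDifference

variable {R : Type*}

def secondDiff [Ring R] (u : ℕ → R) (j : ℕ) : R := u (j + 1) - 2 * u j + u (j - 1)

def wronskian [Ring R] (u v : ℕ → R) (j : ℕ) : R := u (j + 1) * v j - v (j + 1) * u j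

theorem Finset.sum_Icc_one_sub_pred [AddCommGroup R] (f : ℕ → R) (N : ℕ) :
    ∑ j ∈ Icc 1 N, (f j - f (j - 1)) = f N - f 0 := by
  induction N with
  | zero => simp
  | succ n ih =>
    rw [sum_Icc_succ_top (by omega), ih, Nat.add_sub_cancel]
    abel

variable [CommRing R] (u v : ℕ → R)

theorem secondDiff_mul_sub_mul_secondDiff {j : ℕ} (hj : 1 ≤ j) :
    secondDiff u j * v j - secondDiff v j * u j = wronskian u v j - wronskian u v (j - 1) := by
  obtain ⟨k, rfl⟩ := Nat.exists_eq_add_of_le' hj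
  simp only [secondDiff, wronskian, Nat.add_sub_cancel]
  ring

theorem sum_secondDiff_mul_sub_mul_secondDiff (N : ℕ) :
    ∑ j ∈ Icc 1 N, (secondDiff u j * v j - secondDiff v j * u j)
      = wronskian u v N - wronskian u v 0 := by
  rw [sum_congr rfl fun j hj => secondDiff_mul_sub_mul_secondDiff u v (mem_Icc.mp hj).1,
    sum_Icc_one_sub_pred]

theorem wronskian_eq_of_step {j : ℕ} {a : R} (hu : u (j + 1) = u j + a) (hv : v (j + 1) = v j) :
    wronskian u v j = a * v j := by
  rw [wronskian, hu, hv]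
  ring

end SecondDifference

theorem hasDerivAt_secondDiff {u : ℕ → ℝ → ℝ} {t : ℝ} (hu : ∀ i, DifferentiableAt ℝ (u i) t)
    (j : ℕ) :
    HasDerivAt (fun s => secondDiff (u · s) j) (secondDiff (fun i => deriv (u i) t) j) t :=
  ((hu (j + 1)).hasDerivAt.sub ((hu j).hasDerivAt.const_mul 2)).add (hu (j - 1)).hasDerivAt

theorem discrete_green_identity_general
    (N : ℕ) (h : ℝ) (hh : 0 < h)
    (σa σb : ℝ) (ψ c : ℕ → ℝ → ℝ)
    (hψdiff : ∀ j, Differentiable ℝ (ψ j))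
    (hpoisson : ∀ t : ℝ, ∀ j ∈ Finset.Icc 1 N,
      ψ (j + 1) t - 2 * ψ j t + ψ (j - 1) t = -h ^ 2 * c j t)
    (hbca : ∀ t : ℝ, ψ 0 t = ψ 1 t + h * σa)
    (hbcb : ∀ t : ℝ, ψ (N + 1) t = ψ N t + h * σb) :
    ∀ t : ℝ,
      (h / 2) * ∑ j ∈ Finset.Icc 1 N,
          (c j t * deriv (ψ j) t - deriv (c j) t * ψ j t)
        = -(σa * deriv (ψ 1) t + σb * deriv (ψ N) t) / 2 := by
  intro t
  set u : ℕ → ℝ := (ψ · t)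
  set v : ℕ → ℝ := fun i => deriv (ψ i) t
  have hc : ∀ j ∈ Icc 1 N, ∀ s, c j s = secondDiff (ψ · s) j / -h ^ 2 := fun j hj s => by
    rw [secondDiff, hpoisson s j hj]
    field_simp
  have hc' : ∀ j ∈ Icc 1 N, deriv (c j) t = secondDiff v j / -h ^ 2 := fun j hj => by
    rw [funext (hc j hj)]
    exact ((hasDerivAt_secondDiff (fun i => (hψdiff i).differentiableAt) j).div_const _).deriv
  have hsummand : ∀ j ∈ Icc 1 N, c j t * v j - deriv (c j) t * u j
      = (secondDiff u j * v j - secondDiff v j * u j) / -h ^ 2 := fun j hj => by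
    rw [hc j hj, hc' j hj]
    ring
  have hv0 : v 1 = v 0 := by
    simp only [v, show ψ 0 = fun s => ψ 1 s + h * σa from funext hbca, deriv_add_const]
  have hvN : v (N + 1) = v N := by
    simp only [v, show ψ (N + 1) = fun s => ψ N s + h * σb from funext hbcb, deriv_add_const]
  have hW0 : wronskian u v 0 = -(h * σa) * v 1 := by
    rw [wronskian_eq_of_step u v (a := -(h * σa)) (by simp only [u, hbca]; ring) hv0, hv0]
  have hWN : wronskian u v N = h * σb * v N := wronskian_eq_of_step u v (hbcb t) hvN
  rw [sum_congr rfl hsummand, ← sum_div,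
    sum_secondDiff_mul_sub_mul_secondDiff, hW0, hWN]
  field_simp
  ring

/-- Discrete Green's identity for the potential term. -/
theorem discrete_green_identity
    (N : ℕ) (hN : 1 ≤ N) (h : ℝ) (hh : 0 < h)
    (σa σb : ℝ) (ψ c : ℕ → ℝ → ℝ)
    (hψdiff : ∀ j, Differentiable ℝ (ψ j))
    (hcdiff : ∀ j, Differentiable ℝ (c j))
    (hpoisson : ∀ t : ℝ, ∀ j ∈ Finset.Icc 1 N,
      ψ (j + 1) t - 2 * ψ j t + ψ (j - 1) t = -h ^ 2 * c j t)
    (hbca : ∀ t : ℝ, ψ 0 t = ψ 1 t + h * σa)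
    (hbcb : ∀ t : ℝ, ψ (N + 1) t = ψ N t + h * σb) :
    ∀ t : ℝ,
      (h / 2) * ∑ j ∈ Finset.Icc 1 N,
          (c j t * deriv (ψ j) t - deriv (c j) t * ψ j t)
        = -(σa * deriv (ψ 1) t + σb * deriv (ψ N) t) / 2 :=
  discrete_green_identity_general N h hh σa σb ψ c hψdiff hpoisson hbca hbcb
end

section
/- (Semi-discrete free energy dissipation) Let c_j(t) > 0 solve the semi-discrete scheme c_j' = (1/h)(e^{−ψ_{j+1/2}}(g_{j+1}−g_j)/h − e^{−ψ_{j−1/2}}(g_j−g_{j−1})/h) with zero boundary fluxes, where g_j = c_j e^{ψ_j}, ψ_{j+1/2} = (ψ_j+ψ_{j+1})/2, and ψ_j solves the discrete Poisson equation ψ_{j+1} − 2ψ_j + ψ_{j−1} = −h²c_j with time-independent Neumann data ψ_0 = ψ_1 + hσ_a, ψ_{N+1} = ψ_N + hσ_b. Then the discrete free energy F = h∑_{j=1}^N (c_j ln c_j + c_j ψ_j / 2) + (σ_a ψ_1 + σ_b ψ_N)/2 satisfies dF/dt = −(1/h)∑_{j=1}^{N−1} e^{−(ψ_{j+1}+ψ_j)/2}(ln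 g_{j+1} − ln g_j)(g_{j+1} − g_j) ≤ 0. -/
/-!
Differentiating `F` gives `h ∑ c_j' (ln g_j + 1) + (h/2) ∑ (c_j ψ_j' - c_j' ψ_j)` plus the boundary
terms `(σ_a ψ_1' + σ_b ψ_N')/2`. Since `h c_j'` is a difference of fluxes vanishing at both ends,
summation by parts turns the first sum into `-∑ Fl_j (ln g_{j+1} - ln g_j)`, which is the claimed
dissipation, nonpositive because `ln` is increasing. The discrete Laplacian is symmetric, so
Green's identity for the Poisson equation and its time derivative (with homogeneous Neumann data)
reduces the second sum to boundary terms which cancel those of `F`.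
-/

open Finset Real

theorem Finset.sum_Icc_sub_pred {M : Type*} [AddCommGroup M] (f : ℕ → M) (N : ℕ) :
    ∑ j ∈ Icc 1 N, (f j - f (j - 1)) = f N - f 0 := by
  induction N with
  | zero => simp
  | succ n ih =>
    rw [sum_Icc_succ_top (by omega), ih, Nat.add_sub_cancel]
    abel

theorem Finset.sum_Icc_sub_pred_mul_of_eq_zero {R : Type*} [CommRing R] {N : ℕ} {L : ℕ → R}
    (hL0 : L 0 = 0) (hLN : L N = 0) (q : ℕ → R) :
    ∑ j ∈ Icc 1 N, (L j - L (j - 1)) * q j = -∑ j ∈ Icc 1 (N - 1), L j * (q (j + 1) - q j) := by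
  have htel := sum_Icc_sub_pred (fun j => L j * q (j + 1)) N
  have hsplit : ∀ j ∈ Icc 1 N, (L j - L (j - 1)) * q j
      = (L j * q (j + 1) - L (j - 1) * q (j - 1 + 1)) - L j * (q (j + 1) - q j) := by
    intro j hj
    rw [Nat.sub_add_cancel (mem_Icc.1 hj).1]
    ring
  have hlast : ∑ j ∈ Icc 1 (N - 1), L j * (q (j + 1) - q j)
      = ∑ j ∈ Icc 1 N, L j * (q (j + 1) - q j) := by
    refine sum_subset (Icc_subset_Icc_right (Nat.sub_le N 1)) fun j hj hj' => ?_
    obtain rfl : j = N := by simp only [mem_Icc] at hj hj'; omega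
    rw [hLN, zero_mul]
  rw [sum_congr rfl hsplit, sum_sub_distrib, htel, hlast, hL0, hLN]
  simp

theorem Finset.sum_Icc_discrete_green {R : Type*} [CommRing R] (u v : ℕ → R) (N : ℕ) :
    ∑ j ∈ Icc 1 N, ((u (j + 1) - 2 * u j + u (j - 1)) * v j
        - (v (j + 1) - 2 * v j + v (j - 1)) * u j)
      = (u (N + 1) * v N - v (N + 1) * u N) - (u 1 * v 0 - v 1 * u 0) := by
  rw [← sum_Icc_sub_pred (fun j => u (j + 1) * v j - v (j + 1) * u j) N]
  refine sum_congr rfl fun j hj => ?_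
  rw [Nat.sub_add_cancel (mem_Icc.1 hj).1]
  ring

theorem sq_mul_sum_mul_sub_of_discrete_poisson {R : Type*} [CommRing R] {N : ℕ} {h σa σb : R}
    {c c' ψ ψ' : ℕ → R}
    (hψ : ∀ j ∈ Icc 1 N, ψ (j + 1) - 2 * ψ j + ψ (j - 1) = -h ^ 2 * c j)
    (hψ' : ∀ j ∈ Icc 1 N, ψ' (j + 1) - 2 * ψ' j + ψ' (j - 1) = -h ^ 2 * c' j)
    (ha : ψ 0 = ψ 1 + h * σa) (hb : ψ (N + 1) = ψ N + h * σb)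
    (ha' : ψ' 0 = ψ' 1) (hb' : ψ' (N + 1) = ψ' N) :
    h ^ 2 * ∑ j ∈ Icc 1 N, (c j * ψ' j - c' j * ψ j) = -h * (σa * ψ' 1 + σb * ψ' N) := by
  have hlaplacian : h ^ 2 * ∑ j ∈ Icc 1 N, (c j * ψ' j - c' j * ψ j)
      = -∑ j ∈ Icc 1 N, ((ψ (j + 1) - 2 * ψ j + ψ (j - 1)) * ψ' j
          - (ψ' (j + 1) - 2 * ψ' j + ψ' (j - 1)) * ψ j) := by
    rw [mul_sum, ← sum_neg_distrib]
    refine sum_congr rfl fun j hj => ?_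
    rw [hψ j hj, hψ' j hj]
    ring
  rw [hlaplacian, sum_Icc_discrete_green]
  linear_combination ψ 1 * ha' - ψ' 1 * ha - ψ' N * hb + ψ N * hb'

theorem hasDerivAt_free_energy_density {c ψ : ℝ → ℝ} {c' ψ' t : ℝ} (hc : HasDerivAt c c' t)
    (hpos : 0 < c t) (hψ : HasDerivAt ψ ψ' t) :
    HasDerivAt (fun s => c s * log (c s) + c s * ψ s / 2)
      (c' * (log (c t) + ψ t + 1) + (c t * ψ' - c' * ψ t) / 2) t := by
  refine ((hc.mul (hc.log hpos.ne')).add ((hc.mul hψ).div_const 2)).congr_deriv ?_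
  field_simp
  ring

theorem hasDerivAt_free_energy {N : ℕ} {h σa σb t : ℝ} {c ψ : ℕ → ℝ → ℝ} {c' ψ' : ℕ → ℝ}
    (hc : ∀ j ∈ Icc 1 N, HasDerivAt (c j) (c' j) t) (hpos : ∀ j ∈ Icc 1 N, 0 < c j t)
    (hψ : ∀ j, HasDerivAt (ψ j) (ψ' j) t) :
    HasDerivAt (fun s => h * ∑ j ∈ Icc 1 N, (c j s * log (c j s) + c j s * ψ j s / 2)
        + (σa * ψ 1 s + σb * ψ N s) / 2)
      (h * ∑ j ∈ Icc 1 N, (c' j * (log (c j t) + ψ j t + 1) + (c j t * ψ' j - c' j * ψ j t) / 2)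
        + (σa * ψ' 1 + σb * ψ' N) / 2) t :=
  ((HasDerivAt.fun_sum fun j hj =>
      hasDerivAt_free_energy_density (hc j hj) (hpos j hj) (hψ j)).const_mul h).add
    ((((hψ 1).const_mul σa).add ((hψ N).const_mul σb)).div_const 2)

theorem sum_flux_sub_mul_log_add_one {N : ℕ} {h : ℝ} (hh : h ≠ 0) {Fl g ψ : ℕ → ℝ}
    (hFl0 : Fl 0 = 0) (hFlN : Fl N = 0)
    (hFl : ∀ j, 1 ≤ j → j < N → Fl j = exp (-((ψ j + ψ (j + 1)) / 2)) * (g (j + 1) - g j) / h) :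
    ∑ j ∈ Icc 1 N, (Fl j - Fl (j - 1)) * (log (g j) + 1)
      = -(1 / h) * ∑ j ∈ Icc 1 (N - 1),
          exp (-((ψ (j + 1) + ψ j) / 2)) * (log (g (j + 1)) - log (g j)) * (g (j + 1) - g j) := by
  rw [sum_Icc_sub_pred_mul_of_eq_zero hFl0 hFlN, mul_sum, ← sum_neg_distrib]
  refine sum_congr rfl fun j hj => ?_
  rw [hFl j (mem_Icc.1 hj).1 (by grind), add_comm (ψ j)]
  field_simp
  ring

theorem log_sub_log_mul_sub_nonneg {x y : ℝ} (hx : 0 < x) (hy : 0 < y) :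
    0 ≤ (log y - log x) * (y - x) := by
  rcases le_total x y with hxy | hyx
  · exact mul_nonneg (sub_nonneg.2 (log_le_log hx hxy)) (sub_nonneg.2 hxy)
  · exact mul_nonneg_of_nonpos_of_nonpos (sub_nonpos.2 (log_le_log hy hyx)) (sub_nonpos.2 hyx)

theorem sum_mul_log_sub_log_mul_sub_nonneg {N : ℕ} {a g : ℕ → ℝ} (ha : ∀ j, 0 ≤ a j)
    (hg : ∀ j ∈ Icc 1 N, 0 < g j) :
    0 ≤ ∑ j ∈ Icc 1 (N - 1), a j * (log (g (j + 1)) - log (g j)) * (g (j + 1) - g j) := by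
  refine sum_nonneg fun j hj => ?_
  simp only [mem_Icc] at hj
  rw [mul_assoc]
  exact mul_nonneg (ha j) (log_sub_log_mul_sub_nonneg (hg j (by simp only [mem_Icc]; omega))
    (hg (j + 1) (by simp only [mem_Icc]; omega)))

theorem semi_discrete_free_energy_dissipation_general
    (N : ℕ) (h : ℝ) (hh : 0 < h)
    (σa σb : ℝ) (c ψ g : ℕ → ℝ → ℝ) (Fl : ℕ → ℝ → ℝ)
    (hgdef : ∀ j t, g j t = c j t * Real.exp (ψ j t))
    (hcpos : ∀ j ∈ Finset.Icc 1 N, ∀ t : ℝ, 0 < c j t)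
    (hψdiff : ∀ j, Differentiable ℝ (ψ j))
    (hFl0 : ∀ t, Fl 0 t = 0) (hFlN : ∀ t, Fl N t = 0)
    (hFl : ∀ j, 1 ≤ j → j < N → ∀ t : ℝ,
      Fl j t = Real.exp (-((ψ j t + ψ (j + 1) t) / 2)) * (g (j + 1) t - g j t) / h)
    (hscheme : ∀ j ∈ Finset.Icc 1 N, ∀ t : ℝ,
      HasDerivAt (c j) ((Fl j t - Fl (j - 1) t) / h) t)
    (hpoisson : ∀ t : ℝ, ∀ j ∈ Finset.Icc 1 N,
      ψ (j + 1) t - 2 * ψ j t + ψ (j - 1) t = -h ^ 2 * c j t)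
    (hbca : ∀ t : ℝ, ψ 0 t = ψ 1 t + h * σa)
    (hbcb : ∀ t : ℝ, ψ (N + 1) t = ψ N t + h * σb)
    (F : ℝ → ℝ)
    (hF : ∀ t, F t = h * ∑ j ∈ Finset.Icc 1 N,
        (c j t * Real.log (c j t) + c j t * ψ j t / 2)
      + (σa * ψ 1 t + σb * ψ N t) / 2) :
    ∀ t : ℝ,
      HasDerivAt F
        (-(1 / h) * ∑ j ∈ Finset.Icc 1 (N - 1),
          Real.exp (-((ψ (j + 1) t + ψ j t) / 2)) *
            (Real.log (g (j + 1) t) - Real.log (g j t)) * (g (j + 1) t - g j t)) t ∧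
      -(1 / h) * ∑ j ∈ Finset.Icc 1 (N - 1),
          Real.exp (-((ψ (j + 1) t + ψ j t) / 2)) *
            (Real.log (g (j + 1) t) - Real.log (g j t)) * (g (j + 1) t - g j t) ≤ 0 := by
  intro t
  set c' : ℕ → ℝ := fun j => (Fl j t - Fl (j - 1) t) / h
  set ψ' : ℕ → ℝ := fun j => deriv (ψ j) t
  have hψ' : ∀ j, HasDerivAt (ψ j) (ψ' j) t := fun j => (hψdiff j t).hasDerivAt
  have ha' : ψ' 0 = ψ' 1 :=
    (hψ' 0).unique (((hψ' 1).add_const (h * σa)).congr_of_eventuallyEq (.of_forall hbca))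
  have hb' : ψ' (N + 1) = ψ' N :=
    (hψ' (N + 1)).unique (((hψ' N).add_const (h * σb)).congr_of_eventuallyEq (.of_forall hbcb))
  have hpoisson' : ∀ j ∈ Icc 1 N, ψ' (j + 1) - 2 * ψ' j + ψ' (j - 1) = -h ^ 2 * c' j :=
    fun j hj => ((((hψ' (j + 1)).sub ((hψ' j).const_mul 2)).add (hψ' (j - 1)))).unique
      (((hscheme j hj t).const_mul _).congr_of_eventuallyEq (.of_forall fun s => hpoisson s j hj))
  have hgreen : h * ∑ j ∈ Icc 1 N, (c j t * ψ' j - c' j * ψ j t) = -(σa * ψ' 1 + σb * ψ' N) :=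
    mul_left_cancel₀ hh.ne' <| by
      linear_combination sq_mul_sum_mul_sub_of_discrete_poisson (c := (c · t)) (ψ := (ψ · t))
        (hpoisson t) hpoisson' (hbca t) (hbcb t) ha' hb'
  have hsplit : ∀ j ∈ Icc 1 N,
      c' j * (log (c j t) + ψ j t + 1) + (c j t * ψ' j - c' j * ψ j t) / 2
        = (Fl j t - Fl (j - 1) t) * (log (g j t) + 1) / h + (c j t * ψ' j - c' j * ψ j t) / 2 :=
    fun j hj => by
      rw [hgdef, log_mul (hcpos j hj t).ne' (exp_pos _).ne', log_exp]
      ring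
  refine ⟨?_, mul_nonpos_of_nonpos_of_nonneg (by simp [hh.le])
    (sum_mul_log_sub_log_mul_sub_nonneg (fun _ => (exp_pos _).le)
      fun j hj => hgdef j t ▸ mul_pos (hcpos j hj t) (exp_pos _))⟩
  rw [show F = _ from funext hF]
  refine (hasDerivAt_free_energy (hscheme · · t) (hcpos · · t) hψ').congr_deriv ?_
  rw [sum_congr rfl hsplit, sum_add_distrib, ← sum_div, ← sum_div,
    sum_flux_sub_mul_log_add_one hh.ne' (hFl0 t) (hFlN t) (fun j h₁ h₂ => hFl j h₁ h₂ t),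
    mul_add, mul_div_cancel₀ _ hh.ne']
  linear_combination hgreen / 2

/-- Semi-discrete free energy dissipation for the single-species scheme. -/
theorem semi_discrete_free_energy_dissipation
    (N : ℕ) (hN : 1 ≤ N) (h : ℝ) (hh : 0 < h)
    (σa σb : ℝ) (c ψ g : ℕ → ℝ → ℝ) (Fl : ℕ → ℝ → ℝ)
    (hgdef : ∀ j t, g j t = c j t * Real.exp (ψ j t))
    (hcpos : ∀ j ∈ Finset.Icc 1 N, ∀ t : ℝ, 0 < c j t)
    (hψdiff : ∀ j, Differentiable ℝ (ψ j))
    (hFl0 : ∀ t, Fl 0 t = 0) (hFlN : ∀ t, Fl N t = 0)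
    (hFl : ∀ j, 1 ≤ j → j < N → ∀ t : ℝ,
      Fl j t = Real.exp (-((ψ j t + ψ (j + 1) t) / 2)) * (g (j + 1) t - g j t) / h)
    (hscheme : ∀ j ∈ Finset.Icc 1 N, ∀ t : ℝ,
      HasDerivAt (c j) ((Fl j t - Fl (j - 1) t) / h) t)
    (hpoisson : ∀ t : ℝ, ∀ j ∈ Finset.Icc 1 N,
      ψ (j + 1) t - 2 * ψ j t + ψ (j - 1) t = -h ^ 2 * c j t)
    (hbca : ∀ t : ℝ, ψ 0 t = ψ 1 t + h * σa)
    (hbcb : ∀ t : ℝ, ψ (N + 1) t = ψ N t + h * σb)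
    (F : ℝ → ℝ)
    (hF : ∀ t, F t = h * ∑ j ∈ Finset.Icc 1 N,
        (c j t * Real.log (c j t) + c j t * ψ j t / 2)
      + (σa * ψ 1 t + σb * ψ N t) / 2) :
    ∀ t : ℝ,
      HasDerivAt F
        (-(1 / h) * ∑ j ∈ Finset.Icc 1 (N - 1),
          Real.exp (-((ψ (j + 1) t + ψ j t) / 2)) *
            (Real.log (g (j + 1) t) - Real.log (g j t)) * (g (j + 1) t - g j t)) t ∧
      -(1 / h) * ∑ j ∈ Finset.Icc 1 (N - 1),
          Real.exp (-((ψ (j + 1) t + ψ j t) / 2)) *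
            (Real.log (g (j + 1) t) - Real.log (g j t)) * (g (j + 1) t - g j t) ≤ 0 :=
  semi_discrete_free_energy_dissipation_general N h hh σa σb c ψ g Fl hgdef hcpos hψdiff hFl0 hFlN
    hFl hscheme hpoisson hbca hbcb F hF
end

section
/- For the multi-species Euler scheme with charges q_i ∈ {+1, −1} (or general reals), if A_j = −h²∑_{s=1}^j ∑_{i=1}^m q_i c_s^{i,n} − hσ_a where all c_s^{i,n} ≥ 0 and the masses C^± = h∑_{{i : ±q_i>0}}∑_{j=1}^N q_i c_j^{i,0} are conserved, then under the compatibility condition σ_a + σ_b = −(C^+ + C^−) one has h(C^− + σ_b) ≤ A_j ≤ −h(C^− + σ_a) for all j. -/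
/-!
Each species contributes `q i * ∑_{s ≤ j} c s` to the partial charge; since the densities are
nonnegative, this lies between `0` and the full species charge `q i * ∑_{s ≤ N} c s`. Hence the
total partial charge lies between the total negative charge `C⁻ / h` and the total positive
charge `C⁺ / h` (mass conservation lets us use the initial data for these), and the compatibility
condition turns the two bounds into the bounds on `A_j`.
-/

open Finset

namespace Finset

variable {ι M : Type*} [AddCommMonoid M] [PartialOrder M] [IsOrderedAddMonoid M]

theorem sum_le_sum_filter_of_le_of_nonpos (s : Finset ι) (p : ι → Prop) [DecidablePred p]
    {f g : ι → M} (hfg : ∀ i ∈ s, p i → f i ≤ g i) (hf : ∀ i ∈ s, ¬ p i → f i ≤ 0) :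
    ∑ i ∈ s, f i ≤ ∑ i ∈ s.filter p, g i := by
  rw [← sum_filter_add_sum_filter_not s p f, ← add_zero (∑ i ∈ s.filter p, g i)]
  gcongr with i hi i hi
  · exact hfg i (mem_filter.1 hi).1 (mem_filter.1 hi).2
  · exact sum_nonpos fun i hi => hf i (mem_filter.1 hi).1 (mem_filter.1 hi).2

theorem sum_filter_le_sum_of_le_of_nonneg (s : Finset ι) (p : ι → Prop) [DecidablePred p]
    {f g : ι → M} (hgf : ∀ i ∈ s, p i → g i ≤ f i) (hf : ∀ i ∈ s, ¬ p i → 0 ≤ f i) :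
    ∑ i ∈ s.filter p, g i ≤ ∑ i ∈ s, f i := by
  rw [← sum_filter_add_sum_filter_not s p f, ← add_zero (∑ i ∈ s.filter p, g i)]
  gcongr with i hi i hi
  · exact hgf i (mem_filter.1 hi).1 (mem_filter.1 hi).2
  · exact sum_nonneg fun i hi => hf i (mem_filter.1 hi).1 (mem_filter.1 hi).2

end Finset

section PartialCharge

variable {ι κ : Type*} {S T : Finset κ} {q : ℝ} {c : κ → ℝ}

theorem sum_mul_le_sum_mul_of_subset_of_nonneg (hST : S ⊆ T) (hc : ∀ s ∈ T, 0 ≤ c s)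
    (hq : 0 ≤ q) : ∑ s ∈ S, q * c s ≤ ∑ s ∈ T, q * c s :=
  sum_le_sum_of_subset_of_nonneg hST fun s hs _ => mul_nonneg hq (hc s hs)

theorem sum_mul_le_sum_mul_of_subset_of_nonpos (hST : S ⊆ T) (hc : ∀ s ∈ T, 0 ≤ c s)
    (hq : q ≤ 0) : ∑ s ∈ T, q * c s ≤ ∑ s ∈ S, q * c s := by
  simp only [← mul_sum]
  exact mul_le_mul_of_nonpos_left (sum_le_sum_of_subset_of_nonneg hST fun s hs _ => hc s hs) hq

theorem sum_mul_nonneg_of_subset (hST : S ⊆ T) (hc : ∀ s ∈ T, 0 ≤ c s) (hq : 0 ≤ q) :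
    0 ≤ ∑ s ∈ S, q * c s :=
  sum_nonneg fun s hs => mul_nonneg hq (hc s (hST hs))

theorem sum_mul_nonpos_of_subset (hST : S ⊆ T) (hc : ∀ s ∈ T, 0 ≤ c s) (hq : q ≤ 0) :
    ∑ s ∈ S, q * c s ≤ 0 :=
  sum_nonpos fun s hs => mul_nonpos_of_nonpos_of_nonneg hq (hc s (hST hs))

variable (I : Finset ι) (q : ι → ℝ) {c : ι → κ → ℝ}

theorem partial_charge_le_positive_charge (hST : S ⊆ T) (hc : ∀ i ∈ I, ∀ s ∈ T, 0 ≤ c i s) :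
    ∑ i ∈ I, ∑ s ∈ S, q i * c i s ≤ ∑ i ∈ I.filter (0 < q ·), ∑ s ∈ T, q i * c i s :=
  sum_le_sum_filter_of_le_of_nonpos I _
    (fun i hi hq => sum_mul_le_sum_mul_of_subset_of_nonneg hST (hc i hi) hq.le)
    (fun i hi hq => sum_mul_nonpos_of_subset hST (hc i hi) (not_lt.1 hq))

theorem negative_charge_le_partial_charge (hST : S ⊆ T) (hc : ∀ i ∈ I, ∀ s ∈ T, 0 ≤ c i s) :
    ∑ i ∈ I.filter (q · < 0), ∑ s ∈ T, q i * c i s ≤ ∑ i ∈ I, ∑ s ∈ S, q i * c i s :=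
  sum_filter_le_sum_of_le_of_nonneg I _
    (fun i hi hq => sum_mul_le_sum_mul_of_subset_of_nonpos hST (hc i hi) hq.le)
    (fun i hi hq => sum_mul_nonneg_of_subset hST (hc i hi) (not_lt.1 hq))

end PartialCharge

theorem multispecies_A_bounds_general
    (N m : ℕ) (h : ℝ) (hh : 0 < h)
    (σa σb : ℝ) (q : ℕ → ℝ) (cn c0 : ℕ → ℕ → ℝ) (A : ℕ → ℝ)
    (Cp Cm : ℝ)
    (hcn : ∀ i ∈ Finset.Icc 1 m, ∀ j ∈ Finset.Icc 1 N, 0 ≤ cn i j)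
    (hmass : ∀ i ∈ Finset.Icc 1 m,
      h * ∑ j ∈ Finset.Icc 1 N, q i * cn i j
        = h * ∑ j ∈ Finset.Icc 1 N, q i * c0 i j)
    (hCp : Cp = h * ∑ i ∈ (Finset.Icc 1 m).filter (fun i => 0 < q i),
        ∑ j ∈ Finset.Icc 1 N, q i * c0 i j)
    (hCm : Cm = h * ∑ i ∈ (Finset.Icc 1 m).filter (fun i => q i < 0),
        ∑ j ∈ Finset.Icc 1 N, q i * c0 i j)
    (hA : ∀ j ≤ N, A j = -h ^ 2 * ∑ s ∈ Finset.Icc 1 j,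
        ∑ i ∈ Finset.Icc 1 m, q i * cn i s - h * σa)
    (hcompat : σa + σb = -(Cp + Cm)) :
    ∀ j ≤ N, h * (Cm + σb) ≤ A j ∧ A j ≤ -h * (Cm + σa) := by
  intro j hj
  have hconserved : ∀ (p : ℕ → Prop) [DecidablePred p],
      ∑ i ∈ (Icc 1 m).filter p, ∑ s ∈ Icc 1 N, q i * c0 i s
        = ∑ i ∈ (Icc 1 m).filter p, ∑ s ∈ Icc 1 N, q i * cn i s := fun p _ =>
    sum_congr rfl fun i hi => (mul_left_cancel₀ hh.ne' (hmass i (mem_filter.1 hi).1)).symm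
  have hsub : Icc 1 j ⊆ Icc 1 N := Icc_subset_Icc le_rfl hj
  set X := ∑ i ∈ Icc 1 m, ∑ s ∈ Icc 1 j, q i * cn i s
  have hX_le : h * X ≤ Cp := by
    rw [hCp, hconserved]
    exact mul_le_mul_of_nonneg_left (partial_charge_le_positive_charge _ q hsub hcn) hh.le
  have hle_X : Cm ≤ h * X := by
    rw [hCm, hconserved]
    exact mul_le_mul_of_nonneg_left (negative_charge_le_partial_charge _ q hsub hcn) hh.le
  have hAj : A j = -h * (h * X) - h * σa := by rw [hA j hj, sum_comm]; ring
  rw [hAj]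
  constructor <;> nlinarith

/-- Bounds on A_j for the multi-species scheme under mass conservation and compatibility. -/
theorem multispecies_A_bounds
    (N m : ℕ) (hN : 1 ≤ N) (hm : 1 ≤ m) (h : ℝ) (hh : 0 < h)
    (σa σb : ℝ) (q : ℕ → ℝ) (cn c0 : ℕ → ℕ → ℝ) (A : ℕ → ℝ)
    (Cp Cm : ℝ)
    (hcn : ∀ i ∈ Finset.Icc 1 m, ∀ j ∈ Finset.Icc 1 N, 0 ≤ cn i j)
    (hmass : ∀ i ∈ Finset.Icc 1 m,
      h * ∑ j ∈ Finset.Icc 1 N, q i * cn i j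
        = h * ∑ j ∈ Finset.Icc 1 N, q i * c0 i j)
    (hCp : Cp = h * ∑ i ∈ (Finset.Icc 1 m).filter (fun i => 0 < q i),
        ∑ j ∈ Finset.Icc 1 N, q i * c0 i j)
    (hCm : Cm = h * ∑ i ∈ (Finset.Icc 1 m).filter (fun i => q i < 0),
        ∑ j ∈ Finset.Icc 1 N, q i * c0 i j)
    (hA : ∀ j ≤ N, A j = -h ^ 2 * ∑ s ∈ Finset.Icc 1 j,
        ∑ i ∈ Finset.Icc 1 m, q i * cn i s - h * σa)
    (hcompat : σa + σb = -(Cp + Cm)) :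
    ∀ j ≤ N, h * (Cm + σb) ≤ A j ∧ A j ≤ -h * (Cm + σa) :=
  multispecies_A_bounds_general N m h hh σa σb q cn c0 A Cp Cm hcn hmass hCp hCm hA hcompat
end
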